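/- arXiv:2602.09198 — 2 statements merged into one kernel-verified Lean document; each statement's English description precedes it below -/
import Mathlib

section
/- (Energy inequality on the control volume to the left of a sliver.) Let q be a C¹ function on a neighbourhood of the closure of C⁻, let u be continuous on [−Δx,0], and let w be continuous on [0,Δt] (the inflow trace on the vertical interface x = −Δx). If the tested variational identity ∫_{−Δx}^{0} q(x,Δt)² dx − ∫_{−Δx}^{0} q(x,0)u(x) dx − ∬_{C⁻} q(∂_t q + ∂_x q) dx dt − {q²}⁻ − ∫₀^{Δt} q(−Δx,t) w(t) dt = 0 holds, then ∫_{−Δx}^{0} q(x,Δt)² dx − ∫_{−Δx}^{0} u(x)² dx − {q²}⁻ − ∫₀^{Δt} w(t)² dt ≤ 0. -/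
open MeasureTheory

/-- The open sliver (rhombus) with vertices `(0,0)`, `(δΔx, Δt/2)`, `(0, Δt)`
and `(−δΔx, Δt/2)` in the `(x,t)`-plane. -/
def sliverSet (Δx Δt δ : ℝ) : Set (ℝ × ℝ) :=
  {p | |p.1| * (Δt / 2) + |p.2 - Δt / 2| * (δ * Δx) < δ * Δx * (Δt / 2)}

/-- Weighted right-face pairing `{w}⁺`: the integral of `w·(n_x + n_t)` over the
two right faces of the sliver with respect to arclength (`n` the outward unit
normal of the sliver). -/
noncomputable def pairPlus (Δx Δt δ : ℝ) (w : ℝ × ℝ → ℝ) : ℝ :=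
  (∫ s in (0:ℝ)..1, w (s * (δ * Δx), s * (Δt / 2)) * (Δt / 2 - δ * Δx)) +
  (∫ s in (0:ℝ)..1, w ((1 - s) * (δ * Δx), (1 + s) * (Δt / 2)) * (Δt / 2 + δ * Δx))

/-- Weighted left-face pairing `{w}⁻`: the integral of `w·(n_x + n_t)` over the
two left faces of the sliver with respect to arclength (`n` the outward unit
normal of the sliver). -/
noncomputable def pairMinus (Δx Δt δ : ℝ) (w : ℝ × ℝ → ℝ) : ℝ :=
  -(∫ s in (0:ℝ)..1, w (-(s * (δ * Δx)), s * (Δt / 2)) * (Δt / 2 + δ * Δx)) -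
  (∫ s in (0:ℝ)..1, w (-((1 - s) * (δ * Δx)), (1 + s) * (Δt / 2)) * (Δt / 2 - δ * Δx))

/-- The control volume to the right of the sliver:
`C⁺ = ((0,Δx)×(0,Δt)) \ cl(S)`. -/
def Cplus (Δx Δt δ : ℝ) : Set (ℝ × ℝ) :=
  (Set.Ioo 0 Δx ×ˢ Set.Ioo 0 Δt) \ closure (sliverSet Δx Δt δ)

/-- The control volume to the left of the sliver:
`C⁻ = ((−Δx,0)×(0,Δt)) \ cl(S)`. -/
def Cminus (Δx Δt δ : ℝ) : Set (ℝ × ℝ) :=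
  (Set.Ioo (-Δx) 0 ×ˢ Set.Ioo 0 Δt) \ closure (sliverSet Δx Δt δ)

/-- Partial derivative in time `∂ₜ f`. -/
noncomputable def dT (f : ℝ × ℝ → ℝ) (p : ℝ × ℝ) : ℝ := fderiv ℝ f p (0, 1)

/-- Partial derivative in space `∂ₓ f`. -/
noncomputable def dX (f : ℝ × ℝ → ℝ) (p : ℝ × ℝ) : ℝ := fderiv ℝ f p (1, 0)

/-!
Since `q (∂ₜq + ∂ₓq) = ∂ₜ(q²/2) + ∂ₓ(q²/2)`, the divergence theorem on `C⁻` gives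
`2 ∬_{C⁻} q (∂ₜq + ∂ₓq) = ∫ q(·,Δt)² - ∫ q(·,0)² - ∫ q(-Δx,·)² - {q²}⁻`.
We obtain it from Fubini, slicing vertically for the `∂ₜ` term and horizontally for the `∂ₓ`
term: the fundamental theorem of calculus on each slice leaves boundary values, and those on the
sliver faces are reparametrized to the face integrals making up `{q²}⁻`.
Substituted into the variational identity, this turns the claim into
`-∫ (q(·,0) - u)² - ∫ (q(-Δx,·) - w)² ≤ 0`.
-/

section Slicing

variable {α β E : Type*} [MeasurableSpace α] [MeasurableSpace β] [NormedAddCommGroup E]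
  [NormedSpace ℝ E] {μ : Measure α} {ν : Measure β} [SFinite μ] [SFinite ν]
  {s : Set (α × β)} {f : α × β → E}

theorem setIntegral_prod_eq_integral_setIntegral_preimage_mk (hs : MeasurableSet s)
    (hf : IntegrableOn f s (μ.prod ν)) :
    ∫ p in s, f p ∂μ.prod ν = ∫ x, ∫ y in Prod.mk x ⁻¹' s, f (x, y) ∂ν ∂μ := by
  rw [← integral_indicator hs, integral_prod _ ((integrable_indicator_iff hs).2 hf)]
  congr 1 with x
  rw [← integral_indicator (measurable_prodMk_left hs)]
  rfl

theorem setIntegral_prod_eq_integral_setIntegral_preimage_mk_swap (hs : MeasurableSet s)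
    (hf : IntegrableOn f s (μ.prod ν)) :
    ∫ p in s, f p ∂μ.prod ν = ∫ y, ∫ x in (fun x => (x, y)) ⁻¹' s, f (x, y) ∂μ ∂ν := by
  rw [← integral_indicator hs, integral_prod_symm _ ((integrable_indicator_iff hs).2 hf)]
  congr 1 with y
  rw [← integral_indicator (measurable_prodMk_right hs)]
  rfl

end Slicing

theorem integral_mul_deriv_eq_sq_sub_sq {f f' : ℝ → ℝ} {a b : ℝ}
    (hf : ∀ t ∈ Set.uIcc a b, HasDerivAt f (f' t) t)
    (hint : IntervalIntegrable (fun t => f t * f' t) volume a b) :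
    ∫ t in a..b, f t * f' t = (f b ^ 2 - f a ^ 2) / 2 := by
  have hsq : ∀ t ∈ Set.uIcc a b, HasDerivAt (fun t => f t ^ 2 / 2) (f t * f' t) t := fun t ht =>
    (((hf t ht).fun_pow 2).div_const 2).congr_deriv (by norm_num; ring)
  rw [intervalIntegral.integral_eq_sub_of_hasDerivAt hsq hint]
  ring

theorem two_mul_integral_mul_le_integral_sq_add_integral_sq {f g : ℝ → ℝ} {a b : ℝ} (hab : a ≤ b)
    (hf : ContinuousOn f (Set.Icc a b)) (hg : ContinuousOn g (Set.Icc a b)) :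
    2 * ∫ x in a..b, f x * g x ≤ (∫ x in a..b, f x ^ 2) + ∫ x in a..b, g x ^ 2 := by
  have hf2 := (hf.pow 2).intervalIntegrable_of_Icc (μ := volume) hab
  have hg2 := (hg.pow 2).intervalIntegrable_of_Icc (μ := volume) hab
  calc 2 * ∫ x in a..b, f x * g x = ∫ x in a..b, 2 * (f x * g x) :=
        (intervalIntegral.integral_const_mul _ _).symm
    _ ≤ ∫ x in a..b, (f x ^ 2 + g x ^ 2) :=
        intervalIntegral.integral_mono_on hab
          (((hf.mul hg).intervalIntegrable_of_Icc hab).const_mul 2) (hf2.add hg2)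
          fun x _ => by nlinarith [sq_nonneg (f x - g x)]
    _ = _ := intervalIntegral.integral_add hf2 hg2

section PartialDerivatives

variable {q : ℝ × ℝ → ℝ} {U : Set (ℝ × ℝ)}

theorem DifferentiableAt.hasDerivAt_dT {x t : ℝ} (hq : DifferentiableAt ℝ q (x, t)) :
    HasDerivAt (fun s => q (x, s)) (dT q (x, t)) t :=
  hq.hasFDerivAt.comp_hasDerivAt t ((hasDerivAt_const t x).prodMk (hasDerivAt_id t))

theorem DifferentiableAt.hasDerivAt_dX {x t : ℝ} (hq : DifferentiableAt ℝ q (x, t)) :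
    HasDerivAt (fun s => q (s, t)) (dX q (x, t)) x :=
  hq.hasFDerivAt.comp_hasDerivAt x ((hasDerivAt_id x).prodMk (hasDerivAt_const x t))

theorem ContDiffOn.continuousOn_mul_dT (hU : IsOpen U) (hq : ContDiffOn ℝ 1 q U) :
    ContinuousOn (fun p => q p * dT q p) U :=
  hq.continuousOn.mul ((hq.continuousOn_fderiv_of_isOpen hU le_rfl).clm_apply continuousOn_const)

theorem ContDiffOn.continuousOn_mul_dX (hU : IsOpen U) (hq : ContDiffOn ℝ 1 q U) :
    ContinuousOn (fun p => q p * dX q p) U :=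
  hq.continuousOn.mul ((hq.continuousOn_fderiv_of_isOpen hU le_rfl).clm_apply continuousOn_const)

theorem ContDiffOn.integral_mul_dT (hU : IsOpen U) (hq : ContDiffOn ℝ 1 q U) {x a b : ℝ}
    (hab : a ≤ b) (hseg : ∀ t ∈ Set.Icc a b, (x, t) ∈ U) :
    ∫ t in a..b, q (x, t) * dT q (x, t) = (q (x, b) ^ 2 - q (x, a) ^ 2) / 2 := by
  refine integral_mul_deriv_eq_sq_sub_sq (fun t ht => ?_) ?_
  · rw [Set.uIcc_of_le hab] at ht
    exact ((hq.differentiableOn one_ne_zero).differentiableAt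
      (hU.mem_nhds (hseg t ht))).hasDerivAt_dT
  · exact ((hq.continuousOn_mul_dT hU).comp (by fun_prop) hseg).intervalIntegrable_of_Icc hab

theorem ContDiffOn.integral_mul_dX (hU : IsOpen U) (hq : ContDiffOn ℝ 1 q U) {t a b : ℝ}
    (hab : a ≤ b) (hseg : ∀ x ∈ Set.Icc a b, (x, t) ∈ U) :
    ∫ x in a..b, q (x, t) * dX q (x, t) = (q (b, t) ^ 2 - q (a, t) ^ 2) / 2 := by
  refine integral_mul_deriv_eq_sq_sub_sq (fun x hx => ?_) ?_
  · rw [Set.uIcc_of_le hab] at hx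
    exact ((hq.differentiableOn one_ne_zero).differentiableAt
      (hU.mem_nhds (hseg x hx))).hasDerivAt_dX
  · exact ((hq.continuousOn_mul_dX hU).comp (by fun_prop) hseg).intervalIntegrable_of_Icc hab

end PartialDerivatives

/-- Differs from `C⁻` only by a null set (part of the sliver boundary) but, unlike
`closure (sliverSet …)`, has explicit sections. -/
def Mminus (Δx Δt δ : ℝ) : Set (ℝ × ℝ) :=
  (Set.Ioo (-Δx) 0 ×ˢ Set.Ioo 0 Δt) \ sliverSet Δx Δt δ

def Kminus (Δx Δt δ : ℝ) : Set (ℝ × ℝ) :=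
  (Set.Icc (-Δx) 0 ×ˢ Set.Icc 0 Δt) \ sliverSet Δx Δt δ

/-- The time at which the vertical line through `x ≤ 0` meets the sliver
(or `Δt / 2` if it misses it). -/
noncomputable def sliverEntryTime (Δx Δt δ x : ℝ) : ℝ :=
  min (-x * Δt / (2 * (δ * Δx))) (Δt / 2)

noncomputable def sliverHalfWidth (Δx Δt δ t : ℝ) : ℝ :=
  δ * Δx - 2 * (δ * Δx) / Δt * |t - Δt / 2|

noncomputable def lowerLeftFace (Δx Δt δ s : ℝ) : ℝ × ℝ := (-(s * (δ * Δx)), s * (Δt / 2))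

noncomputable def upperLeftFace (Δx Δt δ s : ℝ) : ℝ × ℝ :=
  (-((1 - s) * (δ * Δx)), (1 + s) * (Δt / 2))

section Geometry

variable {Δx Δt δ : ℝ}

theorem isOpen_sliverSet : IsOpen (sliverSet Δx Δt δ) :=
  isOpen_lt (by fun_prop) continuous_const

theorem closure_sliverSet_subset : closure (sliverSet Δx Δt δ) ⊆
    {p | |p.1| * (Δt / 2) + |p.2 - Δt / 2| * (δ * Δx) ≤ δ * Δx * (Δt / 2)} :=
  closure_minimal (Set.ofPred_subset_ofPred.2 fun _ => le_of_lt)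
    (isClosed_le (by fun_prop) continuous_const)

theorem isCompact_Kminus : IsCompact (Kminus Δx Δt δ) :=
  (isCompact_Icc.prod isCompact_Icc).diff isOpen_sliverSet

theorem Mminus_subset_Kminus : Mminus Δx Δt δ ⊆ Kminus Δx Δt δ :=
  Set.sdiff_subset_sdiff_left (Set.prod_mono Set.Ioo_subset_Icc_self Set.Ioo_subset_Icc_self)

theorem measurableSet_Mminus : MeasurableSet (Mminus Δx Δt δ) :=
  (measurableSet_Ioo.prod measurableSet_Ioo).diff isOpen_sliverSet.measurableSet

/-- Pushing a point of `Kminus` slightly towards the line `t = Δt / 2` and to the left lands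
in `C⁻`. -/
theorem Kminus_subset_closure_Cminus (hΔx : 0 < Δx) (hΔt : 0 < Δt) (hδ0 : 0 < δ)
    (hδ : δ ≤ 1 / 2) : Kminus Δx Δt δ ⊆ closure (Cminus Δx Δt δ) := by
  have ha : 0 < δ * Δx := mul_pos hδ0 hΔx
  have haΔ : δ * Δx ≤ Δx / 2 := by nlinarith
  rintro ⟨x, t⟩ ⟨⟨⟨hx1, hx2⟩, ht1, ht2⟩, hS⟩
  have hg : δ * Δx * (Δt / 2) ≤ |x| * (Δt / 2) + |t - Δt / 2| * (δ * Δx) := not_lt.1 hS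
  set F : ℝ → ℝ × ℝ := fun ε => ((1 - ε) * x - 3 / 2 * ε * (δ * Δx), (1 - ε) * t + ε * (Δt / 2))
  have hF : Filter.Tendsto F (nhdsWithin 0 (Set.Ioi 0)) (nhds (x, t)) := by
    have h0 : F 0 = (x, t) := by simp [F]
    exact h0 ▸ ((show Continuous F by fun_prop).tendsto 0).mono_left nhdsWithin_le_nhds
  refine mem_closure_of_tendsto hF ?_
  filter_upwards [Ioo_mem_nhdsGT_of_mem (by norm_num : (0:ℝ) ∈ Set.Ico 0 1)] with ε ⟨hε0, hε1⟩
  simp only [F]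
  refine ⟨⟨⟨by nlinarith, by nlinarith⟩, by nlinarith, by nlinarith⟩, fun hcl => ?_⟩
  have hle := closure_sliverSet_subset hcl
  have e1 : |(1 - ε) * x - 3 / 2 * ε * (δ * Δx)| = (1 - ε) * |x| + 3 / 2 * ε * (δ * Δx) := by
    rw [abs_of_nonpos (by nlinarith), abs_of_nonpos hx2]
    ring
  have e2 : |(1 - ε) * t + ε * (Δt / 2) - Δt / 2| = (1 - ε) * |t - Δt / 2| := by
    rw [show (1 - ε) * t + ε * (Δt / 2) - Δt / 2 = (1 - ε) * (t - Δt / 2) by ring,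
      abs_mul, abs_of_nonneg (by linarith)]
  simp only [Set.mem_ofPred_eq, e1, e2] at hle
  nlinarith [mul_le_mul_of_nonneg_left hg (by linarith : (0:ℝ) ≤ 1 - ε),
    mul_pos (mul_pos hε0 ha) hΔt]

theorem volume_sliverBoundary (ha : 0 < δ * Δx) :
    volume {p : ℝ × ℝ | |p.1| * (Δt / 2) + |p.2 - Δt / 2| * (δ * Δx) = δ * Δx * (Δt / 2)} = 0 := by
  have hmeas : MeasurableSet
      {p : ℝ × ℝ | |p.1| * (Δt / 2) + |p.2 - Δt / 2| * (δ * Δx) = δ * Δx * (Δt / 2)} :=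
    measurableSet_eq_fun (by fun_prop) (by fun_prop)
  rw [Measure.volume_eq_prod, Measure.prod_apply hmeas]
  -- each vertical section consists of at most two points
  have hsec : ∀ x : ℝ, volume (Prod.mk x ⁻¹'
      {p : ℝ × ℝ | |p.1| * (Δt / 2) + |p.2 - Δt / 2| * (δ * Δx) = δ * Δx * (Δt / 2)}) = 0 := by
    intro x
    set r := (δ * Δx * (Δt / 2) - |x| * (Δt / 2)) / (δ * Δx)
    refine measure_mono_null (fun t ht => ?_)
      ((Set.toFinite {Δt / 2 + r, Δt / 2 - r}).measure_zero _)
    have hr : |t - Δt / 2| = r := by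
      rw [eq_div_iff ha.ne']
      simp only [Set.mem_preimage, Set.mem_ofPred_eq] at ht
      linarith
    rcases abs_cases (t - Δt / 2) with ⟨h, _⟩ | ⟨h, _⟩
    · exact Or.inl (by linarith)
    · exact Or.inr (by simp only [Set.mem_singleton_iff]; linarith)
  simp only [hsec, lintegral_zero]

theorem Cminus_ae_eq_Mminus (ha : 0 < δ * Δx) :
    Cminus Δx Δt δ =ᵐ[volume] Mminus Δx Δt δ := by
  refine ae_eq_set.2 ⟨?_, measure_mono_null ?_ (volume_sliverBoundary (Δt := Δt) ha)⟩
  · have hCM : Cminus Δx Δt δ ⊆ Mminus Δx Δt δ := Set.sdiff_subset_sdiff_right subset_closure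
    rw [Set.sdiff_eq_empty.2 hCM, measure_empty]
  · rintro p ⟨⟨hp, hpS⟩, hpC⟩
    have hcl : p ∈ closure (sliverSet Δx Δt δ) := by
      by_contra h
      exact hpC ⟨hp, h⟩
    exact le_antisymm (closure_sliverSet_subset hcl) (not_lt.1 hpS)

end Geometry

section Sections

variable {Δx Δt δ : ℝ}

theorem sliverEntryTime_le_half (x : ℝ) : sliverEntryTime Δx Δt δ x ≤ Δt / 2 :=
  min_le_right _ _

theorem sliverEntryTime_pos (ha : 0 < δ * Δx) (hΔt : 0 < Δt) {x : ℝ} (hx : x < 0) :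
    0 < sliverEntryTime Δx Δt δ x :=
  lt_min (div_pos (by nlinarith) (by positivity)) (by positivity)

theorem sliverEntryTime_nonneg (ha : 0 < δ * Δx) (hΔt : 0 < Δt) {x : ℝ} (hx : x ≤ 0) :
    0 ≤ sliverEntryTime Δx Δt δ x :=
  le_min (div_nonneg (by nlinarith) (by positivity)) (by positivity)

theorem sliverEntryTime_of_le (ha : 0 < δ * Δx) (hΔt : 0 < Δt) {x : ℝ} (hx : x ≤ -(δ * Δx)) :
    sliverEntryTime Δx Δt δ x = Δt / 2 :=
  min_eq_right (by rw [le_div_iff₀ (by positivity)]; nlinarith)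

theorem sliverEntryTime_of_ge (ha : 0 < δ * Δx) (hΔt : 0 < Δt) {x : ℝ} (hx : -(δ * Δx) ≤ x) :
    sliverEntryTime Δx Δt δ x = -x * Δt / (2 * (δ * Δx)) :=
  min_eq_left (by rw [div_le_iff₀ (by positivity)]; nlinarith)

theorem continuous_sliverEntryTime : Continuous (sliverEntryTime Δx Δt δ) :=
  (by fun_prop : Continuous fun x : ℝ => -x * Δt / (2 * (δ * Δx))).min continuous_const

theorem continuous_sliverHalfWidth : Continuous (sliverHalfWidth Δx Δt δ) := by
  unfold sliverHalfWidth
  fun_prop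

theorem sliverHalfWidth_le (ha : 0 < δ * Δx) (hΔt : 0 < Δt) (t : ℝ) :
    sliverHalfWidth Δx Δt δ t ≤ δ * Δx :=
  sub_le_self _ (by positivity)

theorem sliverHalfWidth_mul_half (hΔt : 0 < Δt) (t : ℝ) :
    sliverHalfWidth Δx Δt δ t * (Δt / 2) = δ * Δx * (Δt / 2 - |t - Δt / 2|) := by
  unfold sliverHalfWidth
  field_simp

theorem sliverHalfWidth_nonneg (ha : 0 < δ * Δx) (hΔt : 0 < Δt) {t : ℝ} (ht : t ∈ Set.Icc 0 Δt) :
    0 ≤ sliverHalfWidth Δx Δt δ t := by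
  have hle : |t - Δt / 2| ≤ Δt / 2 := abs_le.2 ⟨by linarith [ht.1], by linarith [ht.2]⟩
  nlinarith [sliverHalfWidth_mul_half (δ := δ) (Δx := Δx) hΔt t]

theorem sliverHalfWidth_pos (ha : 0 < δ * Δx) {t : ℝ} (ht : t ∈ Set.Ioo 0 Δt) :
    0 < sliverHalfWidth Δx Δt δ t := by
  have hΔt : 0 < Δt := ht.1.trans ht.2
  have hlt : |t - Δt / 2| < Δt / 2 := abs_lt.2 ⟨by linarith [ht.1], by linarith [ht.2]⟩
  nlinarith [sliverHalfWidth_mul_half (δ := δ) (Δx := Δx) hΔt t]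

theorem mk_notMem_sliverSet_iff_sliverEntryTime (ha : 0 < δ * Δx) (hΔt : 0 < Δt) {x t : ℝ}
    (hx : x ≤ 0) :
    (x, t) ∉ sliverSet Δx Δt δ ↔ Δt / 2 - sliverEntryTime Δx Δt δ x ≤ |t - Δt / 2| := by
  rw [sliverSet, Set.mem_ofPred_eq, not_lt]
  rcases le_total x (-(δ * Δx)) with h | h
  · rw [sliverEntryTime_of_le ha hΔt h, abs_of_nonpos hx, sub_self]
    exact iff_of_true (by nlinarith [abs_nonneg (t - Δt / 2)]) (abs_nonneg _)
  · rw [sliverEntryTime_of_ge ha hΔt h, abs_of_nonpos hx]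
    conv_rhs => rw [← mul_le_mul_iff_of_pos_right ha]
    set a := δ * Δx
    have : (Δt / 2 - -x * Δt / (2 * a)) * a = (a + x) * (Δt / 2) := by
      field_simp
      ring
    rw [this]
    constructor <;> intro <;> linarith

theorem mk_notMem_sliverSet_iff_sliverHalfWidth_le (hΔt : 0 < Δt) {x t : ℝ} :
    (x, t) ∉ sliverSet Δx Δt δ ↔ sliverHalfWidth Δx Δt δ t ≤ |x| := by
  rw [sliverSet, Set.mem_ofPred_eq, not_lt]
  conv_rhs => rw [← mul_le_mul_iff_of_pos_right (half_pos hΔt)]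
  rw [sliverHalfWidth_mul_half hΔt]
  constructor <;> intro <;> linarith

theorem mk_mem_Kminus_of_le_sliverEntryTime (ha : 0 < δ * Δx) (hΔt : 0 < Δt) {x t : ℝ}
    (hx : x ∈ Set.Icc (-Δx) 0) (ht : t ∈ Set.Icc 0 (sliverEntryTime Δx Δt δ x)) :
    (x, t) ∈ Kminus Δx Δt δ := by
  have := sliverEntryTime_le_half (Δx := Δx) (Δt := Δt) (δ := δ) x
  refine ⟨⟨hx, ht.1, by linarith [ht.2]⟩, ?_⟩
  exact (mk_notMem_sliverSet_iff_sliverEntryTime ha hΔt hx.2).2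
    ((by linarith [ht.2] : _ ≤ -(t - Δt / 2)).trans (neg_le_abs _))

theorem mk_mem_Kminus_of_sub_sliverEntryTime_le (ha : 0 < δ * Δx) (hΔt : 0 < Δt) {x t : ℝ}
    (hx : x ∈ Set.Icc (-Δx) 0) (ht : t ∈ Set.Icc (Δt - sliverEntryTime Δx Δt δ x) Δt) :
    (x, t) ∈ Kminus Δx Δt δ := by
  have := sliverEntryTime_le_half (Δx := Δx) (Δt := Δt) (δ := δ) x
  refine ⟨⟨hx, by linarith [ht.1], ht.2⟩, ?_⟩
  exact (mk_notMem_sliverSet_iff_sliverEntryTime ha hΔt hx.2).2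
    ((by linarith [ht.1] : _ ≤ t - Δt / 2).trans (le_abs_self _))

theorem mk_mem_Kminus_of_le_neg_sliverHalfWidth (ha : 0 < δ * Δx) (hΔt : 0 < Δt) {x t : ℝ}
    (ht : t ∈ Set.Icc 0 Δt) (hx : x ∈ Set.Icc (-Δx) (-sliverHalfWidth Δx Δt δ t)) :
    (x, t) ∈ Kminus Δx Δt δ := by
  have := sliverHalfWidth_nonneg ha hΔt ht
  refine ⟨⟨⟨hx.1, by linarith [hx.2]⟩, ht⟩, ?_⟩
  exact (mk_notMem_sliverSet_iff_sliverHalfWidth_le hΔt).2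
    ((by linarith [hx.2] : _ ≤ -x).trans (neg_le_abs _))

theorem prodMk_left_preimage_Mminus (ha : 0 < δ * Δx) (hΔt : 0 < Δt) {x : ℝ}
    (hx : x ∈ Set.Ioo (-Δx) 0) :
    Prod.mk x ⁻¹' Mminus Δx Δt δ =
      Set.Ioc 0 (sliverEntryTime Δx Δt δ x) ∪ Set.Ico (Δt - sliverEntryTime Δx Δt δ x) Δt := by
  have h0 := sliverEntryTime_pos ha hΔt (δ := δ) hx.2
  have h1 := sliverEntryTime_le_half (Δx := Δx) (Δt := Δt) (δ := δ) x
  ext t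
  simp only [Mminus, Set.mem_preimage, Set.mem_sdiff, Set.mem_prod, hx, true_and,
    mk_notMem_sliverSet_iff_sliverEntryTime ha hΔt hx.2.le, Set.mem_union,
    Set.mem_Ioc, Set.mem_Ico, Set.mem_Ioo]
  rcases abs_cases (t - Δt / 2) with ⟨h, _⟩ | ⟨h, _⟩ <;> rw [h] <;> grind

theorem prodMk_left_preimage_Mminus_of_notMem {x : ℝ} (hx : x ∉ Set.Ioo (-Δx) 0) :
    Prod.mk x ⁻¹' Mminus Δx Δt δ = ∅ :=
  Set.eq_empty_of_forall_notMem fun _ ht => hx ht.1.1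

theorem prodMk_right_preimage_Mminus (ha : 0 < δ * Δx) {t : ℝ} (ht : t ∈ Set.Ioo 0 Δt) :
    (fun x => (x, t)) ⁻¹' Mminus Δx Δt δ = Set.Ioc (-Δx) (-sliverHalfWidth Δx Δt δ t) := by
  have hΔt : 0 < Δt := ht.1.trans ht.2
  have h0 := sliverHalfWidth_pos ha ht
  ext x
  simp only [Mminus, Set.mem_preimage, Set.mem_sdiff, Set.mem_prod, ht, and_true,
    mk_notMem_sliverSet_iff_sliverHalfWidth_le hΔt, Set.mem_Ioc, Set.mem_Ioo]
  rcases abs_cases x with ⟨h, _⟩ | ⟨h, _⟩ <;> rw [h] <;> grind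

theorem prodMk_right_preimage_Mminus_of_notMem {t : ℝ} (ht : t ∉ Set.Ioo 0 Δt) :
    (fun x => (x, t)) ⁻¹' Mminus Δx Δt δ = ∅ :=
  Set.eq_empty_of_forall_notMem fun _ hx => ht hx.1.2

end Sections

section Faces

variable {Δx Δt δ : ℝ}

theorem mk_sliverEntryTime_eq_lowerLeftFace (ha : 0 < δ * Δx) (hΔt : 0 < Δt) {x : ℝ}
    (hx : -(δ * Δx) ≤ x) :
    (x, sliverEntryTime Δx Δt δ x) = lowerLeftFace Δx Δt δ (x / -(δ * Δx)) := by
  rw [sliverEntryTime_of_ge ha hΔt hx, lowerLeftFace]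
  set a := δ * Δx
  ext <;> field_simp

theorem mk_sub_sliverEntryTime_eq_upperLeftFace (ha : 0 < δ * Δx) (hΔt : 0 < Δt) {x : ℝ}
    (hx : -(δ * Δx) ≤ x) :
    (x, Δt - sliverEntryTime Δx Δt δ x) = upperLeftFace Δx Δt δ (1 + x / (δ * Δx)) := by
  rw [sliverEntryTime_of_ge ha hΔt hx, upperLeftFace]
  set a := δ * Δx
  ext <;> field_simp <;> ring

theorem mk_neg_sliverHalfWidth_eq_lowerLeftFace (hΔt : 0 < Δt) {t : ℝ} (ht : t ≤ Δt / 2) :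
    (-sliverHalfWidth Δx Δt δ t, t) = lowerLeftFace Δx Δt δ (t / (Δt / 2)) := by
  rw [sliverHalfWidth, lowerLeftFace, abs_of_nonpos (by linarith)]
  ext <;> field_simp
  ring

theorem mk_neg_sliverHalfWidth_eq_upperLeftFace (hΔt : 0 < Δt) {t : ℝ} (ht : Δt / 2 ≤ t) :
    (-sliverHalfWidth Δx Δt δ t, t) = upperLeftFace Δx Δt δ (-1 + t / (Δt / 2)) := by
  rw [sliverHalfWidth, upperLeftFace, abs_of_nonneg (by linarith)]
  ext <;> field_simp <;> ring

variable {g : ℝ × ℝ → ℝ}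

/-- Parametrizing the left faces by their `x`-coordinate: on `[-Δx, -δΔx]` the vertical line
misses the sliver and the two boundary values coincide. -/
theorem integral_sliverEntry_sub_sliverExit_eq_faces (ha : 0 < δ * Δx) (haΔx : δ * Δx ≤ Δx)
    (hΔt : 0 < Δt) (hg : ContinuousOn g (Kminus Δx Δt δ)) :
    ∫ x in (-Δx)..0, (g (x, sliverEntryTime Δx Δt δ x) - g (x, Δt - sliverEntryTime Δx Δt δ x)) =
      δ * Δx * ((∫ s in (0:ℝ)..1, g (lowerLeftFace Δx Δt δ s)) -
        ∫ s in (0:ℝ)..1, g (upperLeftFace Δx Δt δ s)) := by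
  have hentry : ContinuousOn (fun x => g (x, sliverEntryTime Δx Δt δ x)) (Set.Icc (-Δx) 0) :=
    hg.comp (continuous_id.prodMk continuous_sliverEntryTime).continuousOn fun x hx =>
      mk_mem_Kminus_of_le_sliverEntryTime ha hΔt hx ⟨sliverEntryTime_nonneg ha hΔt hx.2, le_rfl⟩
  have hexit : ContinuousOn (fun x => g (x, Δt - sliverEntryTime Δx Δt δ x)) (Set.Icc (-Δx) 0) :=
    hg.comp (continuous_id.prodMk (continuous_const.sub continuous_sliverEntryTime)).continuousOn
      fun x hx => mk_mem_Kminus_of_sub_sliverEntryTime_le ha hΔt hx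
        ⟨le_rfl, by linarith [sliverEntryTime_nonneg (Δt := Δt) (δ := δ) ha hΔt hx.2]⟩
  have hlt : -Δx ≤ -(δ * Δx) := by linarith
  have hgt : -(δ * Δx) ≤ 0 := by linarith
  have hdiff : ContinuousOn (fun x => g (x, sliverEntryTime Δx Δt δ x) -
      g (x, Δt - sliverEntryTime Δx Δt δ x)) (Set.Icc (-Δx) 0) := hentry.sub hexit
  rw [← intervalIntegral.integral_add_adjacent_intervals
    ((hdiff.mono (Set.Icc_subset_Icc le_rfl hgt)).intervalIntegrable_of_Icc hlt)
    ((hdiff.mono (Set.Icc_subset_Icc hlt le_rfl)).intervalIntegrable_of_Icc hgt)]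
  have hmiss : ∫ x in (-Δx)..(-(δ * Δx)),
      (g (x, sliverEntryTime Δx Δt δ x) - g (x, Δt - sliverEntryTime Δx Δt δ x)) = 0 := by
    refine (intervalIntegral.integral_congr fun x hx => ?_).trans intervalIntegral.integral_zero
    rw [Set.uIcc_of_le hlt] at hx
    simp only [sliverEntryTime_of_le ha hΔt hx.2, sub_half, sub_self]
  have hlower : ∫ x in (-(δ * Δx))..0, g (x, sliverEntryTime Δx Δt δ x) =
      δ * Δx * ∫ s in (0:ℝ)..1, g (lowerLeftFace Δx Δt δ s) := by
    rw [intervalIntegral.integral_congr fun x hx =>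
      congrArg g (mk_sliverEntryTime_eq_lowerLeftFace ha hΔt (Set.uIcc_of_le hgt ▸ hx).1),
      intervalIntegral.integral_comp_div (fun s => g (lowerLeftFace Δx Δt δ s))
        (neg_ne_zero.2 ha.ne'),
      neg_div_neg_eq, div_self ha.ne', zero_div, intervalIntegral.integral_symm, smul_eq_mul]
    ring
  have hupper : ∫ x in (-(δ * Δx))..0, g (x, Δt - sliverEntryTime Δx Δt δ x) =
      δ * Δx * ∫ s in (0:ℝ)..1, g (upperLeftFace Δx Δt δ s) := by
    rw [intervalIntegral.integral_congr fun x hx =>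
      congrArg g (mk_sub_sliverEntryTime_eq_upperLeftFace ha hΔt (Set.uIcc_of_le hgt ▸ hx).1),
      intervalIntegral.integral_comp_add_div (fun s => g (upperLeftFace Δx Δt δ s)) ha.ne', neg_div,
      div_self ha.ne', zero_div, add_neg_cancel, add_zero, smul_eq_mul]
  rw [hmiss, zero_add, intervalIntegral.integral_sub
    ((hentry.mono (Set.Icc_subset_Icc hlt le_rfl)).intervalIntegrable_of_Icc hgt)
    ((hexit.mono (Set.Icc_subset_Icc hlt le_rfl)).intervalIntegrable_of_Icc hgt), hlower, hupper]
  ring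

theorem integral_neg_sliverHalfWidth_eq_faces (ha : 0 < δ * Δx) (haΔx : δ * Δx ≤ Δx)
    (hΔt : 0 < Δt) (hg : ContinuousOn g (Kminus Δx Δt δ)) :
    ∫ t in (0:ℝ)..Δt, g (-sliverHalfWidth Δx Δt δ t, t) =
      Δt / 2 * ((∫ s in (0:ℝ)..1, g (lowerLeftFace Δx Δt δ s)) +
        ∫ s in (0:ℝ)..1, g (upperLeftFace Δx Δt δ s)) := by
  have hcont : ContinuousOn (fun t => g (-sliverHalfWidth Δx Δt δ t, t)) (Set.Icc 0 Δt) :=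
    hg.comp (continuous_sliverHalfWidth.neg.prodMk continuous_id).continuousOn fun t ht =>
      mk_mem_Kminus_of_le_neg_sliverHalfWidth ha hΔt ht
        ⟨by linarith [sliverHalfWidth_le (Δt := Δt) ha hΔt t], le_rfl⟩
  have h0 : (0:ℝ) ≤ Δt / 2 := by linarith
  have h1 : Δt / 2 ≤ Δt := by linarith
  have hΔt2 : Δt / 2 ≠ 0 := by positivity
  rw [← intervalIntegral.integral_add_adjacent_intervals
    ((hcont.mono (Set.Icc_subset_Icc le_rfl h1)).intervalIntegrable_of_Icc h0)
    ((hcont.mono (Set.Icc_subset_Icc h0 le_rfl)).intervalIntegrable_of_Icc h1)]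
  have hlower : ∫ t in (0:ℝ)..(Δt / 2), g (-sliverHalfWidth Δx Δt δ t, t) =
      Δt / 2 * ∫ s in (0:ℝ)..1, g (lowerLeftFace Δx Δt δ s) := by
    rw [intervalIntegral.integral_congr fun t ht =>
      congrArg g (mk_neg_sliverHalfWidth_eq_lowerLeftFace hΔt (Set.uIcc_of_le h0 ▸ ht).2),
      intervalIntegral.integral_comp_div (fun s => g (lowerLeftFace Δx Δt δ s)) hΔt2, zero_div,
      div_self hΔt2, smul_eq_mul]
  have hupper : ∫ t in (Δt / 2)..Δt, g (-sliverHalfWidth Δx Δt δ t, t) =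
      Δt / 2 * ∫ s in (0:ℝ)..1, g (upperLeftFace Δx Δt δ s) := by
    rw [intervalIntegral.integral_congr fun t ht =>
      congrArg g (mk_neg_sliverHalfWidth_eq_upperLeftFace hΔt (Set.uIcc_of_le h1 ▸ ht).1),
      intervalIntegral.integral_comp_add_div (fun s => g (upperLeftFace Δx Δt δ s)) hΔt2,
      div_self hΔt2, show Δt / (Δt / 2) = 2 by field_simp, smul_eq_mul]
    norm_num
  rw [hlower, hupper, mul_add]

end Faces

theorem pairMinus_eq (Δx Δt δ : ℝ) (w : ℝ × ℝ → ℝ) :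
    pairMinus Δx Δt δ w =
      -((Δt / 2 + δ * Δx) * ∫ s in (0:ℝ)..1, w (lowerLeftFace Δx Δt δ s)) -
        (Δt / 2 - δ * Δx) * ∫ s in (0:ℝ)..1, w (upperLeftFace Δx Δt δ s) := by
  simp only [pairMinus, lowerLeftFace, upperLeftFace, intervalIntegral.integral_mul_const]
  ring

section Divergence

variable {Δx Δt δ : ℝ} {q : ℝ × ℝ → ℝ} {U : Set (ℝ × ℝ)}

theorem ContinuousOn.integrableOn_Mminus {F : ℝ × ℝ → ℝ} (hF : ContinuousOn F (Kminus Δx Δt δ)) :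
    IntegrableOn F (Mminus Δx Δt δ) :=
  (hF.integrableOn_compact isCompact_Kminus).mono_set Mminus_subset_Kminus

theorem integral_prodMk_left_preimage_Mminus_mul_dT (hU : IsOpen U) (hq : ContDiffOn ℝ 1 q U)
    (ha : 0 < δ * Δx) (hΔt : 0 < Δt) (hKU : Kminus Δx Δt δ ⊆ U) {x : ℝ}
    (hx : x ∈ Set.Ioo (-Δx) 0) :
    ∫ t in Prod.mk x ⁻¹' Mminus Δx Δt δ, q (x, t) * dT q (x, t) =
      (q (x, Δt) ^ 2 - q (x, 0) ^ 2 + (q (x, sliverEntryTime Δx Δt δ x) ^ 2 -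
        q (x, Δt - sliverEntryTime Δx Δt δ x) ^ 2)) / 2 := by
  rw [prodMk_left_preimage_Mminus ha hΔt hx]
  set m := sliverEntryTime Δx Δt δ x
  have hm0 : 0 ≤ m := sliverEntryTime_nonneg ha hΔt hx.2.le
  have hm : m ≤ Δt / 2 := sliverEntryTime_le_half x
  have hxIcc : x ∈ Set.Icc (-Δx) 0 := Set.Ioo_subset_Icc_self hx
  have hlow : ∀ t ∈ Set.Icc 0 m, (x, t) ∈ U := fun t ht =>
    hKU (mk_mem_Kminus_of_le_sliverEntryTime ha hΔt hxIcc ht)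
  have hhigh : ∀ t ∈ Set.Icc (Δt - m) Δt, (x, t) ∈ U := fun t ht =>
    hKU (mk_mem_Kminus_of_sub_sliverEntryTime_le ha hΔt hxIcc ht)
  have hcont {a b : ℝ} (hab : ∀ t ∈ Set.Icc a b, (x, t) ∈ U) :
      ContinuousOn (fun t => q (x, t) * dT q (x, t)) (Set.Icc a b) :=
    (hq.continuousOn_mul_dT hU).comp (by fun_prop) hab
  rw [setIntegral_congr_set ((Filter.EventuallyEq.refl _ _).union Ico_ae_eq_Ioc),
    setIntegral_union (Set.disjoint_left.2 fun t h1 h2 => by linarith [h1.2, h2.1])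
      measurableSet_Ioc ((hcont hlow).integrableOn_Icc.mono_set Set.Ioc_subset_Icc_self)
      ((hcont hhigh).integrableOn_Icc.mono_set Set.Ioc_subset_Icc_self),
    ← intervalIntegral.integral_of_le hm0,
    ← intervalIntegral.integral_of_le (by linarith), hq.integral_mul_dT hU hm0 hlow,
    hq.integral_mul_dT hU (by linarith) hhigh]
  ring

theorem integral_prodMk_right_preimage_Mminus_mul_dX (hU : IsOpen U) (hq : ContDiffOn ℝ 1 q U)
    (ha : 0 < δ * Δx) (haΔx : δ * Δx ≤ Δx) (hKU : Kminus Δx Δt δ ⊆ U) {t : ℝ}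
    (ht : t ∈ Set.Ioo 0 Δt) :
    ∫ x in (fun x => (x, t)) ⁻¹' Mminus Δx Δt δ, q (x, t) * dX q (x, t) =
      (q (-sliverHalfWidth Δx Δt δ t, t) ^ 2 - q (-Δx, t) ^ 2) / 2 := by
  have hΔt : 0 < Δt := ht.1.trans ht.2
  have hle : -Δx ≤ -sliverHalfWidth Δx Δt δ t := by
    linarith [sliverHalfWidth_le (Δt := Δt) ha hΔt t]
  rw [prodMk_right_preimage_Mminus ha ht, ← intervalIntegral.integral_of_le hle,
    hq.integral_mul_dX hU hle fun x hx =>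
      hKU (mk_mem_Kminus_of_le_neg_sliverHalfWidth ha hΔt (Set.Ioo_subset_Icc_self ht) hx)]

theorem setIntegral_Mminus_mul_dT (hU : IsOpen U) (hq : ContDiffOn ℝ 1 q U) (ha : 0 < δ * Δx)
    (haΔx : δ * Δx ≤ Δx) (hΔt : 0 < Δt) (hKU : Kminus Δx Δt δ ⊆ U) :
    ∫ p in Mminus Δx Δt δ, q p * dT q p =
      ((∫ x in (-Δx)..0, q (x, Δt) ^ 2) - (∫ x in (-Δx)..0, q (x, 0) ^ 2) +
        δ * Δx * ((∫ s in (0:ℝ)..1, q (lowerLeftFace Δx Δt δ s) ^ 2) -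
          ∫ s in (0:ℝ)..1, q (upperLeftFace Δx Δt δ s) ^ 2)) / 2 := by
  have hqK : ContinuousOn (fun p => q p ^ 2) (Kminus Δx Δt δ) := (hq.continuousOn.mono hKU).pow 2
  have hedge {t : ℝ → ℝ} (ht : Continuous t)
      (hmem : ∀ x ∈ Set.Icc (-Δx) 0, (x, t x) ∈ Kminus Δx Δt δ) :
      IntervalIntegrable (fun x => q (x, t x) ^ 2) volume (-Δx) 0 :=
    (hqK.comp (continuous_id.prodMk ht).continuousOn hmem).intervalIntegrable_of_Icc (by linarith)
  have hm0 {x : ℝ} (hx : x ∈ Set.Icc (-Δx) 0) : 0 ≤ sliverEntryTime Δx Δt δ x :=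
    sliverEntryTime_nonneg ha hΔt hx.2
  have htop := hedge continuous_const fun x hx =>
    mk_mem_Kminus_of_sub_sliverEntryTime_le ha hΔt hx ⟨by linarith [hm0 hx], le_rfl⟩
  have hbot := hedge continuous_const fun x hx =>
    mk_mem_Kminus_of_le_sliverEntryTime ha hΔt hx ⟨le_rfl, hm0 hx⟩
  have hentry := hedge continuous_sliverEntryTime fun x hx =>
    mk_mem_Kminus_of_le_sliverEntryTime ha hΔt hx ⟨hm0 hx, le_rfl⟩
  have hexit := hedge (t := fun x => Δt - sliverEntryTime Δx Δt δ x)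
    (continuous_const.sub continuous_sliverEntryTime) fun x hx =>
    mk_mem_Kminus_of_sub_sliverEntryTime_le ha hΔt hx ⟨le_rfl, by linarith [hm0 hx]⟩
  rw [Measure.volume_eq_prod, setIntegral_prod_eq_integral_setIntegral_preimage_mk
      measurableSet_Mminus (((hq.continuousOn_mul_dT hU).mono hKU).integrableOn_Mminus),
    ← setIntegral_eq_integral_of_forall_compl_eq_zero fun x hx => by
      rw [prodMk_left_preimage_Mminus_of_notMem hx, Measure.restrict_empty, integral_zero_measure],
    setIntegral_congr_fun measurableSet_Ioo fun x hx =>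
      integral_prodMk_left_preimage_Mminus_mul_dT hU hq ha hΔt hKU hx,
    ← integral_Ioc_eq_integral_Ioo, ← intervalIntegral.integral_of_le (by linarith),
    intervalIntegral.integral_div, intervalIntegral.integral_add (htop.sub hbot)
      (hentry.sub hexit), intervalIntegral.integral_sub htop hbot,
    integral_sliverEntry_sub_sliverExit_eq_faces ha haΔx hΔt hqK]

theorem setIntegral_Mminus_mul_dX (hU : IsOpen U) (hq : ContDiffOn ℝ 1 q U) (ha : 0 < δ * Δx)
    (haΔx : δ * Δx ≤ Δx) (hΔt : 0 < Δt) (hKU : Kminus Δx Δt δ ⊆ U) :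
    ∫ p in Mminus Δx Δt δ, q p * dX q p =
      (Δt / 2 * ((∫ s in (0:ℝ)..1, q (lowerLeftFace Δx Δt δ s) ^ 2) +
          ∫ s in (0:ℝ)..1, q (upperLeftFace Δx Δt δ s) ^ 2) -
        ∫ t in (0:ℝ)..Δt, q (-Δx, t) ^ 2) / 2 := by
  have hqK : ContinuousOn (fun p => q p ^ 2) (Kminus Δx Δt δ) := (hq.continuousOn.mono hKU).pow 2
  have hedge {x : ℝ → ℝ} (hx : Continuous x)
      (hmem : ∀ t ∈ Set.Icc 0 Δt, (x t, t) ∈ Kminus Δx Δt δ) :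
      IntervalIntegrable (fun t => q (x t, t) ^ 2) volume 0 Δt :=
    (hqK.comp (hx.prodMk continuous_id).continuousOn hmem).intervalIntegrable_of_Icc hΔt.le
  have hw (t : ℝ) : sliverHalfWidth Δx Δt δ t ≤ Δx := (sliverHalfWidth_le ha hΔt t).trans haΔx
  have hsliver := hedge (x := fun t => -sliverHalfWidth Δx Δt δ t)
    continuous_sliverHalfWidth.neg fun t ht =>
    mk_mem_Kminus_of_le_neg_sliverHalfWidth ha hΔt ht ⟨by linarith [hw t], le_rfl⟩
  have hleft := hedge continuous_const fun t ht =>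
    mk_mem_Kminus_of_le_neg_sliverHalfWidth ha hΔt ht ⟨le_rfl, by linarith [hw t]⟩
  rw [Measure.volume_eq_prod, setIntegral_prod_eq_integral_setIntegral_preimage_mk_swap
      measurableSet_Mminus (((hq.continuousOn_mul_dX hU).mono hKU).integrableOn_Mminus),
    ← setIntegral_eq_integral_of_forall_compl_eq_zero fun t ht => by
      rw [prodMk_right_preimage_Mminus_of_notMem ht, Measure.restrict_empty,
        integral_zero_measure],
    setIntegral_congr_fun measurableSet_Ioo fun t ht =>
      integral_prodMk_right_preimage_Mminus_mul_dX hU hq ha haΔx hKU ht,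
    ← integral_Ioc_eq_integral_Ioo, ← intervalIntegral.integral_of_le hΔt.le,
    intervalIntegral.integral_div, intervalIntegral.integral_sub hsliver hleft,
    integral_neg_sliverHalfWidth_eq_faces ha haΔx hΔt hqK]

theorem setIntegral_Cminus_mul_dT_add_dX (hU : IsOpen U) (hq : ContDiffOn ℝ 1 q U)
    (ha : 0 < δ * Δx) (haΔx : δ * Δx ≤ Δx) (hΔt : 0 < Δt) (hKU : Kminus Δx Δt δ ⊆ U) :
    ∫ p in Cminus Δx Δt δ, q p * (dT q p + dX q p) =
      ((∫ x in (-Δx)..0, q (x, Δt) ^ 2) - (∫ x in (-Δx)..0, q (x, 0) ^ 2) -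
        (∫ t in (0:ℝ)..Δt, q (-Δx, t) ^ 2) - pairMinus Δx Δt δ (fun p => q p ^ 2)) / 2 := by
  simp_rw [mul_add]
  rw [setIntegral_congr_set (Cminus_ae_eq_Mminus ha),
    integral_add (((hq.continuousOn_mul_dT hU).mono hKU).integrableOn_Mminus)
      (((hq.continuousOn_mul_dX hU).mono hKU).integrableOn_Mminus),
    setIntegral_Mminus_mul_dT hU hq ha haΔx hΔt hKU,
    setIntegral_Mminus_mul_dX hU hq ha haΔx hΔt hKU,
    pairMinus_eq]
  ring

end Divergence

/-- Energy inequality on the control volume to the left of a sliver.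
If `q` is `C¹` on a neighbourhood of the closure of `C⁻`, `u` is continuous on
`[−Δx,0]`, `w` is continuous on `[0,Δt]` (the inflow trace on the vertical
interface `x = −Δx`), and the tested variational identity
`∫_{−Δx}^0 q(x,Δt)² dx − ∫_{−Δx}^0 q(x,0)u(x) dx − ∬_{C⁻} q(∂ₜq + ∂ₓq) dx dt
  − {q²}⁻ − ∫₀^{Δt} q(−Δx,t)w(t) dt = 0`
holds, then
`∫_{−Δx}^0 q(x,Δt)² dx − ∫_{−Δx}^0 u(x)² dx − {q²}⁻ − ∫₀^{Δt} w(t)² dt ≤ 0`. -/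
theorem energy_inequality_Cminus (Δx Δt δ : ℝ)
    (hΔx : 0 < Δx) (hΔt : 0 < Δt) (hδ0 : 0 < δ) (hδ : δ ≤ 1 / 2)
    (q : ℝ × ℝ → ℝ) (U : Set (ℝ × ℝ)) (hU : IsOpen U)
    (hCU : closure (Cminus Δx Δt δ) ⊆ U) (hq : ContDiffOn ℝ 1 q U)
    (u : ℝ → ℝ) (hu : ContinuousOn u (Set.Icc (-Δx) 0))
    (w : ℝ → ℝ) (hw : ContinuousOn w (Set.Icc 0 Δt))
    (hvar : (∫ x in (-Δx)..(0:ℝ), (q (x, Δt)) ^ 2)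
        - (∫ x in (-Δx)..(0:ℝ), q (x, 0) * u x)
        - (∫ p in Cminus Δx Δt δ, q p * (dT q p + dX q p))
        - pairMinus Δx Δt δ (fun p => (q p) ^ 2)
        - (∫ t in (0:ℝ)..Δt, q (-Δx, t) * w t) = 0) :
    (∫ x in (-Δx)..(0:ℝ), (q (x, Δt)) ^ 2) - (∫ x in (-Δx)..(0:ℝ), (u x) ^ 2)
      - pairMinus Δx Δt δ (fun p => (q p) ^ 2)
      - (∫ t in (0:ℝ)..Δt, (w t) ^ 2) ≤ 0 := by
  have ha : 0 < δ * Δx := mul_pos hδ0 hΔx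
  have haΔx : δ * Δx ≤ Δx := by nlinarith
  have hKU : Kminus Δx Δt δ ⊆ U := (Kminus_subset_closure_Cminus hΔx hΔt hδ0 hδ).trans hCU
  have hbottom : ContinuousOn (fun x => q (x, 0)) (Set.Icc (-Δx) 0) :=
    hq.continuousOn.comp (by fun_prop) fun x hx =>
      hKU (mk_mem_Kminus_of_le_sliverEntryTime ha hΔt hx
        ⟨le_rfl, sliverEntryTime_nonneg ha hΔt hx.2⟩)
  have hleft : ContinuousOn (fun t => q (-Δx, t)) (Set.Icc 0 Δt) :=
    hq.continuousOn.comp (by fun_prop) fun t ht =>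
      hKU (mk_mem_Kminus_of_le_neg_sliverHalfWidth ha hΔt ht
        ⟨le_rfl, by linarith [sliverHalfWidth_le (Δt := Δt) ha hΔt t]⟩)
  have hu2 := two_mul_integral_mul_le_integral_sq_add_integral_sq (by linarith) hbottom hu
  have hw2 := two_mul_integral_mul_le_integral_sq_add_integral_sq hΔt.le hleft hw
  rw [setIntegral_Cminus_mul_dT_add_dX hU hq ha haΔx hΔt hKU] at hvar
  linarith
end

section
/- (Divergence identity on the control volume to the right of a sliver.) For every C¹ function q on a neighbourhood of the closure of C⁺, one has 2∬_{C⁺} q(∂_t q + ∂_x q) dx dt = ∫₀^{Δx} q(x,Δt)² dx − ∫₀^{Δx} q(x,0)² dx + ∫₀^{Δt} q(Δx,t)² dt − {q²}⁺. -/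
open MeasureTheory

/-!
Since `2 q (∂ₜq + ∂ₓq) = ∂ₓ(q²) + ∂ₜ(q²)`, the integral splits in two. Every horizontal slice of
`C⁺` is an interval running from the right faces of the sliver to `x = Δx`, so Fubini and the
fundamental theorem of calculus turn the `∂ₓ` part into `∫ q(Δx,t)² dt` minus the trace of `q²` on
the right faces, parametrised by `t`. Off the null line `t = Δt/2`, every vertical slice consists of
one interval below and one above the sliver, so the `∂ₜ` part gives the top minus the bottom trace
plus the traces on the right faces parametrised by `x`; the two contributions of the segment
`t = Δt/2, δΔx ≤ x ≤ Δx` cancel. Rescaling both parametrisations of each face to `s ∈ [0,1]`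
(Jacobians `Δt/2` and `δΔx`) produces the weights `Δt/2 ∓ δΔx` of `{q²}⁺`.
-/

open Set Filter Topology

section RegionBetween

variable {F F' : ℝ × ℝ → ℝ} {f g : ℝ → ℝ} {s : Set ℝ}

theorem setIntegral_regionBetween_eq_integral_sub (hf : Measurable f) (hg : Measurable g)
    (hs : MeasurableSet s) (hfg : ∀ x ∈ s, f x ≤ g x)
    (hF : ∀ x ∈ s, ∀ t ∈ Icc (f x) (g x), HasDerivAt (fun t => F (x, t)) (F' (x, t)) t)
    (hF' : IntegrableOn F' (regionBetween f g s)) :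
    ∫ p in regionBetween f g s, F' p = ∫ x in s, (F (x, g x) - F (x, f x)) := by
  have hR := measurableSet_regionBetween hf hg hs
  have hint : Integrable ((regionBetween f g s).indicator F') (volume.prod volume) := by
    rw [← Measure.volume_eq_prod]; exact hF'.integrable_indicator hR
  rw [← integral_indicator hR, Measure.volume_eq_prod, integral_prod _ hint,
    ← integral_indicator hs]
  refine integral_congr_ae ?_
  filter_upwards [hint.prod_right_ae] with x hx
  by_cases hxs : x ∈ s
  · have hsection : (fun t => (regionBetween f g s).indicator F' (x, t))
        = (Ioo (f x) (g x)).indicator (fun t => F' (x, t)) := by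
      ext t
      simp [regionBetween, indicator, hxs]
    rw [hsection, integrable_indicator_iff measurableSet_Ioo] at hx
    rw [indicator_of_mem hxs, hsection, integral_indicator measurableSet_Ioo,
      ← integral_Ioc_eq_integral_Ioo, ← intervalIntegral.integral_of_le (hfg x hxs)]
    refine intervalIntegral.integral_eq_sub_of_hasDerivAt
      (fun t ht => hF x hxs t (by rwa [uIcc_of_le (hfg x hxs)] at ht))
      ((intervalIntegrable_iff_integrableOn_Ioo_of_le (hfg x hxs)).2 hx)
  · simp [regionBetween, indicator, hxs]

theorem setIntegral_preimage_swap_regionBetween_eq_integral_sub (hf : Measurable f)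
    (hg : Measurable g) (hs : MeasurableSet s) (hfg : ∀ t ∈ s, f t ≤ g t)
    (hF : ∀ t ∈ s, ∀ x ∈ Icc (f t) (g t), HasDerivAt (fun x => F (x, t)) (F' (x, t)) x)
    (hF' : IntegrableOn F' (Prod.swap ⁻¹' regionBetween f g s)) :
    ∫ p in Prod.swap ⁻¹' regionBetween f g s, F' p = ∫ t in s, (F (g t, t) - F (f t, t)) := by
  have hswap : MeasurePreserving (Prod.swap : ℝ × ℝ → ℝ × ℝ) := by
    rw [Measure.volume_eq_prod]; exact Measure.measurePreserving_swap
  have hemb : MeasurableEmbedding (Prod.swap : ℝ × ℝ → ℝ × ℝ) :=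
    MeasurableEquiv.prodComm.measurableEmbedding
  have hF'swap : IntegrableOn (F' ∘ Prod.swap) (regionBetween f g s) := by
    rw [← hswap.integrableOn_comp_preimage hemb]
    simpa [Function.comp_def] using hF'
  simpa [Function.comp_def] using (hswap.setIntegral_preimage_emb hemb (F' ∘ Prod.swap) _).trans
    (setIntegral_regionBetween_eq_integral_sub (F := F ∘ Prod.swap) hf hg hs hfg hF hF'swap)

end RegionBetween

theorem HasDerivAt.sq_comp_of_differentiableAt {q : ℝ × ℝ → ℝ} {γ : ℝ → ℝ × ℝ} {v : ℝ × ℝ}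
    {t : ℝ} (hγ : HasDerivAt γ v t) (hq : DifferentiableAt ℝ q (γ t)) :
    HasDerivAt (fun s => q (γ s) ^ 2) (2 * q (γ t) * fderiv ℝ q (γ t) v) t := by
  refine ((hq.hasFDerivAt.comp_hasDerivAt t hγ).fun_pow 2).congr_deriv ?_
  simp only [Function.comp_apply, Nat.cast_ofNat]
  ring

theorem setIntegral_Ioo_sub_eq {u v : ℝ → ℝ} {a b : ℝ} (hab : a ≤ b)
    (hu : ContinuousOn u (Icc a b)) (hv : ContinuousOn v (Icc a b)) :
    ∫ x in Ioo a b, (u x - v x) = (∫ x in a..b, u x) - ∫ x in a..b, v x := by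
  rw [← integral_Ioc_eq_integral_Ioo, ← intervalIntegral.integral_of_le hab,
    intervalIntegral.integral_sub (hu.intervalIntegrable_of_Icc hab)
      (hv.intervalIntegrable_of_Icc hab)]

section Sliver

variable {Δx Δt δ : ℝ}

theorem closure_sliverSet (hΔx : 0 < Δx) (hΔt : 0 < Δt) (hδ0 : 0 < δ) :
    closure (sliverSet Δx Δt δ)
      = {p | |p.1| * (Δt / 2) + |p.2 - Δt / 2| * (δ * Δx) ≤ δ * Δx * (Δt / 2)} := by
  refine (closure_lt_subset_le (by fun_prop) continuous_const).antisymm fun p hp => ?_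
  -- `p` is the limit, as `r ↑ 1`, of its images under the homotheties of ratio `r` centred at
  -- `(0, Δt/2)`, and these lie in the open sliver
  have hlim : Tendsto (fun r : ℝ => (r * p.1, Δt / 2 + r * (p.2 - Δt / 2)))
      (𝓝[<] 1) (𝓝 p) := by
    refine Tendsto.mono_left ?_ nhdsWithin_le_nhds
    simpa using ((by fun_prop : Continuous fun r : ℝ =>
      (r * p.1, Δt / 2 + r * (p.2 - Δt / 2))).tendsto 1)
  refine mem_closure_of_tendsto hlim ?_
  filter_upwards [Ioo_mem_nhdsLT (by norm_num : (0:ℝ) < 1)] with r ⟨hr0, hr1⟩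
  have hp : |p.1| * (Δt / 2) + |p.2 - Δt / 2| * (δ * Δx) ≤ δ * Δx * (Δt / 2) := hp
  show |r * p.1| * (Δt / 2) + |Δt / 2 + r * (p.2 - Δt / 2) - Δt / 2| * (δ * Δx)
    < δ * Δx * (Δt / 2)
  rw [add_sub_cancel_left, abs_mul, abs_mul, abs_of_pos hr0]
  nlinarith [mul_pos (mul_pos hδ0 hΔx) hΔt]

noncomputable def sliverRightFace (Δx Δt δ t : ℝ) : ℝ :=
  δ * Δx * (Δt / 2 - |t - Δt / 2|) / (Δt / 2)

/-- Half the length of the vertical section of the closed sliver at abscissa `0 ≤ x ≤ δ * Δx`;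
the truncation at `0` extends it to larger `x`. -/
noncomputable def sliverHalfHeight (Δx Δt δ x : ℝ) : ℝ :=
  max (Δt / 2 * (δ * Δx - x) / (δ * Δx)) 0

theorem continuous_sliverRightFace : Continuous (sliverRightFace Δx Δt δ) := by
  unfold sliverRightFace; fun_prop

theorem continuous_sliverHalfHeight : Continuous (sliverHalfHeight Δx Δt δ) := by
  unfold sliverHalfHeight; fun_prop

theorem sliverHalfHeight_nonneg (x : ℝ) : 0 ≤ sliverHalfHeight Δx Δt δ x :=
  le_max_right _ _

theorem sliverHalfHeight_le (hΔx : 0 < Δx) (hΔt : 0 < Δt) (hδ0 : 0 < δ) {x : ℝ} (hx : 0 ≤ x) :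
    sliverHalfHeight Δx Δt δ x ≤ Δt / 2 := by
  refine max_le ?_ (by positivity)
  rw [div_le_iff₀ (by positivity)]
  nlinarith

theorem sliverRightFace_nonneg (hΔx : 0 < Δx) (hΔt : 0 < Δt) (hδ0 : 0 < δ) {t : ℝ}
    (ht : t ∈ Icc 0 Δt) : 0 ≤ sliverRightFace Δx Δt δ t := by
  have : 0 ≤ Δt / 2 - |t - Δt / 2| :=
    sub_nonneg.2 (abs_le.2 ⟨by linarith [ht.1], by linarith [ht.2]⟩)
  unfold sliverRightFace
  positivity

theorem sliverRightFace_le (hΔx : 0 < Δx) (hΔt : 0 < Δt) (hδ0 : 0 < δ) (t : ℝ) :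
    sliverRightFace Δx Δt δ t ≤ δ * Δx := by
  rw [sliverRightFace, div_le_iff₀ (by positivity)]
  nlinarith [mul_nonneg (mul_pos hδ0 hΔx).le (abs_nonneg (t - Δt / 2))]

theorem sliverRightFace_lt_iff (hΔt : 0 < Δt) {x t : ℝ} :
    sliverRightFace Δx Δt δ t < x ↔
      δ * Δx * (Δt / 2) < x * (Δt / 2) + |t - Δt / 2| * (δ * Δx) := by
  rw [sliverRightFace, div_lt_iff₀ (by positivity)]
  constructor <;> intro h <;> linarith

theorem sliverRightFace_le_iff (hΔx : 0 < Δx) (hΔt : 0 < Δt) (hδ0 : 0 < δ) {x t : ℝ} :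
    sliverRightFace Δx Δt δ t ≤ x ↔ sliverHalfHeight Δx Δt δ x ≤ |t - Δt / 2| := by
  rw [sliverRightFace, sliverHalfHeight, div_le_iff₀ (by positivity), max_le_iff,
    div_le_iff₀ (by positivity), and_iff_left (abs_nonneg _)]
  constructor <;> intro h <;> linarith

theorem sliverRightFace_lt_iff_of_ne (hΔx : 0 < Δx) (hΔt : 0 < Δt) (hδ0 : 0 < δ) {x t : ℝ}
    (ht : t ≠ Δt / 2) :
    sliverRightFace Δx Δt δ t < x ↔ sliverHalfHeight Δx Δt δ x < |t - Δt / 2| := by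
  rw [sliverRightFace, sliverHalfHeight, div_lt_iff₀ (by positivity), max_lt_iff,
    div_lt_iff₀ (by positivity), and_iff_left (abs_pos.2 (sub_ne_zero.2 ht))]
  constructor <;> intro h <;> linarith

theorem mem_Cplus_iff (hΔx : 0 < Δx) (hΔt : 0 < Δt) (hδ0 : 0 < δ) {x t : ℝ} :
    (x, t) ∈ Cplus Δx Δt δ ↔
      0 < t ∧ t < Δt ∧ sliverRightFace Δx Δt δ t < x ∧ x < Δx := by
  rw [Cplus, closure_sliverSet hΔx hΔt hδ0, sliverRightFace_lt_iff hΔt]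
  simp only [Set.mem_sdiff, mem_prod, mem_Ioo, mem_ofPred_eq, not_le]
  constructor
  · rintro ⟨⟨⟨hx0, hxΔ⟩, ht0, htΔ⟩, h⟩
    rw [abs_of_pos hx0] at h
    exact ⟨ht0, htΔ, h, hxΔ⟩
  · rintro ⟨ht0, htΔ, h, hxΔ⟩
    have hx0 : 0 < x := by
      by_contra! hx
      have hd : |t - Δt / 2| < Δt / 2 := abs_lt.2 ⟨by linarith, by linarith⟩
      nlinarith [mul_lt_mul_of_pos_right hd (mul_pos hδ0 hΔx)]
    rw [abs_of_pos hx0]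
    exact ⟨⟨⟨hx0, hxΔ⟩, ht0, htΔ⟩, h⟩

theorem Cplus_eq_preimage_swap_regionBetween (hΔx : 0 < Δx) (hΔt : 0 < Δt) (hδ0 : 0 < δ) :
    Cplus Δx Δt δ =
      Prod.swap ⁻¹' regionBetween (sliverRightFace Δx Δt δ) (fun _ => Δx) (Ioo 0 Δt) := by
  ext ⟨x, t⟩
  rw [mem_Cplus_iff hΔx hΔt hδ0]
  simp [regionBetween, and_assoc]

def CplusLower (Δx Δt δ : ℝ) : Set (ℝ × ℝ) :=
  regionBetween (fun _ => 0) (fun x => Δt / 2 - sliverHalfHeight Δx Δt δ x) (Ioo 0 Δx)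

def CplusUpper (Δx Δt δ : ℝ) : Set (ℝ × ℝ) :=
  regionBetween (fun x => Δt / 2 + sliverHalfHeight Δx Δt δ x) (fun _ => Δt) (Ioo 0 Δx)

theorem measurableSet_CplusUpper : MeasurableSet (CplusUpper Δx Δt δ) :=
  measurableSet_regionBetween (measurable_const.add continuous_sliverHalfHeight.measurable)
    measurable_const measurableSet_Ioo

theorem disjoint_CplusLower_CplusUpper : Disjoint (CplusLower Δx Δt δ) (CplusUpper Δx Δt δ) :=
  disjoint_left.2 fun p hp hp' => by
    linarith [hp.2.2, hp'.2.1, sliverHalfHeight_nonneg (Δx := Δx) (Δt := Δt) (δ := δ) p.1]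

theorem Cplus_ae_eq_CplusLower_union_CplusUpper (hΔx : 0 < Δx) (hΔt : 0 < Δt) (hδ0 : 0 < δ) :
    Cplus Δx Δt δ =ᵐ[volume] (CplusLower Δx Δt δ ∪ CplusUpper Δx Δt δ : Set (ℝ × ℝ)) := by
  have hline : ∀ᵐ p : ℝ × ℝ, p.2 ≠ Δt / 2 := by
    rw [Measure.volume_eq_prod]
    exact Measure.QuasiMeasurePreserving.ae Measure.quasiMeasurePreserving_snd
      (volume.ae_ne (Δt / 2))
  refine eventuallyEq_set.2 ?_
  filter_upwards [hline] with ⟨x, t⟩ ht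
  have hface := (sliverRightFace_lt_iff_of_ne hΔx hΔt hδ0 (x := x) ht).trans lt_abs
  have hm0 := sliverHalfHeight_nonneg (Δx := Δx) (Δt := Δt) (δ := δ) x
  rw [mem_Cplus_iff hΔx hΔt hδ0]
  simp only [CplusLower, CplusUpper, regionBetween, mem_union, mem_ofPred_eq, mem_Ioo]
  constructor
  · rintro ⟨ht0, htΔ, hx, hxΔ⟩
    have hx0 := (sliverRightFace_nonneg hΔx hΔt hδ0 ⟨ht0.le, htΔ.le⟩).trans_lt hx
    rcases hface.1 hx with hm | hm
    · exact Or.inr ⟨⟨hx0, hxΔ⟩, by linarith, htΔ⟩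
    · exact Or.inl ⟨⟨hx0, hxΔ⟩, ht0, by linarith⟩
  · rintro (⟨⟨hx0, hxΔ⟩, ht0, htm⟩ | ⟨⟨hx0, hxΔ⟩, htm, htΔ⟩)
    · have := sliverHalfHeight_le hΔx hΔt hδ0 hx0.le
      exact ⟨ht0, by linarith, hface.2 (Or.inr (by linarith)), hxΔ⟩
    · exact ⟨by linarith, htΔ, hface.2 (Or.inl (by linarith)), hxΔ⟩

theorem mem_closure_Cplus (hΔx : 0 < Δx) (hΔt : 0 < Δt) (hδ0 : 0 < δ) (hδ : δ ≤ 1 / 2)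
    {x t : ℝ} (ht : t ∈ Icc 0 Δt) (hx : sliverRightFace Δx Δt δ t ≤ x) (hxΔ : x ≤ Δx) :
    (x, t) ∈ closure (Cplus Δx Δt δ) := by
  -- approach `(x, t)` along the segment from the point `(7Δx/8, Δt/2)` of `C⁺`
  let γ : ℝ → ℝ × ℝ := fun ε => ((1 - ε) * x + ε * (7 / 8 * Δx), (1 - ε) * t + ε * (Δt / 2))
  have hlim : Tendsto γ (𝓝[>] 0) (𝓝 (x, t)) := by
    refine Tendsto.mono_left ?_ nhdsWithin_le_nhds
    simpa [γ] using ((by fun_prop : Continuous γ).tendsto 0)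
  refine mem_closure_of_tendsto hlim ?_
  filter_upwards [Ioo_mem_nhdsGT (by norm_num : (0:ℝ) < 1)] with ε ⟨hε0, hε1⟩
  have hface : sliverRightFace Δx Δt δ ((1 - ε) * t + ε * (Δt / 2))
      = (1 - ε) * sliverRightFace Δx Δt δ t + ε * (δ * Δx) := by
    rw [sliverRightFace, sliverRightFace,
      show (1 - ε) * t + ε * (Δt / 2) - Δt / 2 = (1 - ε) * (t - Δt / 2) by ring,
      abs_mul, abs_of_pos (by linarith : (0:ℝ) < 1 - ε)]
    field_simp
    ring
  rw [mem_Cplus_iff hΔx hΔt hδ0, hface]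
  refine ⟨by nlinarith [ht.1], by nlinarith [ht.2], ?_, by nlinarith⟩
  nlinarith [mul_le_mul_of_nonneg_left hδ hΔx.le]

theorem mem_closure_Cplus_of_le_sub_sliverHalfHeight (hΔx : 0 < Δx) (hΔt : 0 < Δt)
    (hδ0 : 0 < δ) (hδ : δ ≤ 1 / 2) {x t : ℝ} (hx : x ∈ Icc 0 Δx)
    (ht : t ∈ Icc 0 (Δt / 2 - sliverHalfHeight Δx Δt δ x)) :
    (x, t) ∈ closure (Cplus Δx Δt δ) := by
  have hm0 := sliverHalfHeight_nonneg (Δx := Δx) (Δt := Δt) (δ := δ) x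
  refine mem_closure_Cplus hΔx hΔt hδ0 hδ ⟨ht.1, by linarith [ht.2]⟩
    ((sliverRightFace_le_iff hΔx hΔt hδ0).2 ?_) hx.2
  rw [abs_of_nonpos (by linarith [ht.2])]
  linarith [ht.2]

theorem mem_closure_Cplus_of_add_sliverHalfHeight_le (hΔx : 0 < Δx) (hΔt : 0 < Δt)
    (hδ0 : 0 < δ) (hδ : δ ≤ 1 / 2) {x t : ℝ} (hx : x ∈ Icc 0 Δx)
    (ht : t ∈ Icc (Δt / 2 + sliverHalfHeight Δx Δt δ x) Δt) :
    (x, t) ∈ closure (Cplus Δx Δt δ) := by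
  have hm0 := sliverHalfHeight_nonneg (Δx := Δx) (Δt := Δt) (δ := δ) x
  refine mem_closure_Cplus hΔx hΔt hδ0 hδ ⟨by linarith [ht.1], ht.2⟩
    ((sliverRightFace_le_iff hΔx hΔt hδ0).2 ?_) hx.2
  rw [abs_of_nonneg (by linarith [ht.1])]
  linarith [ht.1]

theorem isCompact_closure_Cplus (Δx Δt δ : ℝ) : IsCompact (closure (Cplus Δx Δt δ)) :=
  (isCompact_Icc.prod isCompact_Icc).of_isClosed_subset isClosed_closure
    (closure_minimal (fun _ hp => ⟨Ioo_subset_Icc_self hp.1.1, Ioo_subset_Icc_self hp.1.2⟩)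
      (isClosed_Icc.prod isClosed_Icc))

theorem sliverRightFace_mul_half (hΔt : 0 < Δt) {s : ℝ} (hs : s ≤ 1) :
    sliverRightFace Δx Δt δ (s * (Δt / 2)) = s * (δ * Δx) := by
  rw [sliverRightFace, show s * (Δt / 2) - Δt / 2 = -((1 - s) * (Δt / 2)) by ring, abs_neg,
    abs_of_nonneg (mul_nonneg (by linarith) (by positivity))]
  field_simp
  ring

theorem sliverRightFace_one_add_mul_half (hΔt : 0 < Δt) {s : ℝ} (hs : 0 ≤ s) :
    sliverRightFace Δx Δt δ ((1 + s) * (Δt / 2)) = (1 - s) * (δ * Δx) := by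
  rw [sliverRightFace, show (1 + s) * (Δt / 2) - Δt / 2 = s * (Δt / 2) by ring,
    abs_of_nonneg (mul_nonneg hs (by positivity))]
  field_simp

theorem sliverHalfHeight_mul (hΔx : 0 < Δx) (hΔt : 0 < Δt) (hδ0 : 0 < δ) {s : ℝ} (hs : s ≤ 1) :
    sliverHalfHeight Δx Δt δ (s * (δ * Δx)) = (1 - s) * (Δt / 2) := by
  rw [sliverHalfHeight, show Δt / 2 * (δ * Δx - s * (δ * Δx)) / (δ * Δx) = (1 - s) * (Δt / 2) by
    field_simp]
  exact max_eq_left (mul_nonneg (by linarith) (by positivity))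

theorem sliverHalfHeight_eq_zero (hΔx : 0 < Δx) (hΔt : 0 < Δt) (hδ0 : 0 < δ) {x : ℝ}
    (hx : δ * Δx ≤ x) : sliverHalfHeight Δx Δt δ x = 0 :=
  max_eq_right (div_nonpos_of_nonpos_of_nonneg
    (mul_nonpos_of_nonneg_of_nonpos (by positivity) (by linarith)) (by positivity))

noncomputable def lowerRightFaceIntegral (Δx Δt δ : ℝ) (w : ℝ × ℝ → ℝ) : ℝ :=
  ∫ s in (0:ℝ)..1, w (s * (δ * Δx), s * (Δt / 2))

noncomputable def upperRightFaceIntegral (Δx Δt δ : ℝ) (w : ℝ × ℝ → ℝ) : ℝ :=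
  ∫ s in (0:ℝ)..1, w ((1 - s) * (δ * Δx), (1 + s) * (Δt / 2))

theorem pairPlus_eq (w : ℝ × ℝ → ℝ) :
    pairPlus Δx Δt δ w = (Δt / 2 - δ * Δx) * lowerRightFaceIntegral Δx Δt δ w
      + (Δt / 2 + δ * Δx) * upperRightFaceIntegral Δx Δt δ w := by
  simp only [pairPlus, lowerRightFaceIntegral, upperRightFaceIntegral,
    intervalIntegral.integral_mul_const]
  ring

variable {w : ℝ × ℝ → ℝ}

theorem integral_sliverRightFace (hΔx : 0 < Δx) (hΔt : 0 < Δt) (hδ0 : 0 < δ) (hδ : δ ≤ 1 / 2)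
    (hw : ContinuousOn w (closure (Cplus Δx Δt δ))) :
    ∫ t in (0:ℝ)..Δt, w (sliverRightFace Δx Δt δ t, t) =
      Δt / 2 * (lowerRightFaceIntegral Δx Δt δ w + upperRightFaceIntegral Δx Δt δ w) := by
  set G : ℝ → ℝ := fun t => w (sliverRightFace Δx Δt δ t, t)
  have hG : ContinuousOn G (Icc 0 Δt) :=
    hw.comp (continuous_sliverRightFace.prodMk continuous_id).continuousOn fun t ht =>
      mem_closure_Cplus hΔx hΔt hδ0 hδ ht le_rfl
        ((sliverRightFace_le hΔx hΔt hδ0 t).trans (by nlinarith))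
  have hlower : ∫ t in (0:ℝ)..Δt / 2, G t = Δt / 2 * lowerRightFaceIntegral Δx Δt δ w := by
    rw [lowerRightFaceIntegral, ← smul_eq_mul]
    have := intervalIntegral.smul_integral_comp_mul_right (a := 0) (b := 1) G (Δt / 2)
    rw [zero_mul, one_mul] at this
    rw [← this]
    congr 1
    refine intervalIntegral.integral_congr fun s hs => ?_
    rw [uIcc_of_le zero_le_one] at hs
    simp only [G, sliverRightFace_mul_half hΔt hs.2]
  have hupper : ∫ t in Δt / 2..Δt, G t = Δt / 2 * upperRightFaceIntegral Δx Δt δ w := by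
    rw [upperRightFaceIntegral, ← smul_eq_mul]
    have := intervalIntegral.smul_integral_comp_mul_add (a := 0) (b := 1) G (Δt / 2) (Δt / 2)
    rw [mul_zero, zero_add, mul_one, add_halves] at this
    rw [← this]
    congr 1
    refine intervalIntegral.integral_congr fun s hs => ?_
    rw [uIcc_of_le zero_le_one] at hs
    simp only [G, show Δt / 2 * s + Δt / 2 = (1 + s) * (Δt / 2) by ring,
      sliverRightFace_one_add_mul_half hΔt hs.1]
  rw [← intervalIntegral.integral_add_adjacent_intervals (b := Δt / 2)
    ((hG.mono (Icc_subset_Icc_right (by linarith))).intervalIntegrable_of_Icc (by linarith))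
    ((hG.mono (Icc_subset_Icc_left (by linarith))).intervalIntegrable_of_Icc (by linarith)),
    hlower, hupper, mul_add]

theorem integral_sub_sliverHalfHeight (hΔx : 0 < Δx) (hΔt : 0 < Δt) (hδ0 : 0 < δ)
    (hδ : δ ≤ 1 / 2) (hw : ContinuousOn w (closure (Cplus Δx Δt δ))) :
    ∫ x in (0:ℝ)..Δx, w (x, Δt / 2 - sliverHalfHeight Δx Δt δ x) =
      δ * Δx * lowerRightFaceIntegral Δx Δt δ w + ∫ x in δ * Δx..Δx, w (x, Δt / 2) := by
  set G : ℝ → ℝ := fun x => w (x, Δt / 2 - sliverHalfHeight Δx Δt δ x)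
  have hG : ContinuousOn G (Icc 0 Δx) := by
    refine hw.comp (continuous_id.prodMk
      (continuous_const.sub continuous_sliverHalfHeight)).continuousOn fun x hx => ?_
    have hmh := sliverHalfHeight_le hΔx hΔt hδ0 hx.1
    exact mem_closure_Cplus_of_le_sub_sliverHalfHeight hΔx hΔt hδ0 hδ hx ⟨by linarith, le_rfl⟩
  have hface : ∫ x in (0:ℝ)..δ * Δx, G x = δ * Δx * lowerRightFaceIntegral Δx Δt δ w := by
    have := intervalIntegral.smul_integral_comp_mul_right (a := 0) (b := 1) G (δ * Δx)
    rw [zero_mul, one_mul] at this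
    rw [lowerRightFaceIntegral, ← this, smul_eq_mul]
    congr 1
    refine intervalIntegral.integral_congr fun s hs => ?_
    rw [uIcc_of_le zero_le_one] at hs
    simp only [G, sliverHalfHeight_mul hΔx hΔt hδ0 hs.2]
    ring_nf
  have hrest : ∫ x in δ * Δx..Δx, G x = ∫ x in δ * Δx..Δx, w (x, Δt / 2) := by
    refine intervalIntegral.integral_congr fun x hx => ?_
    rw [uIcc_of_le (by nlinarith)] at hx
    simp only [G, sliverHalfHeight_eq_zero hΔx hΔt hδ0 hx.1, sub_zero]
  rw [← intervalIntegral.integral_add_adjacent_intervals (b := δ * Δx)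
    ((hG.mono (Icc_subset_Icc_right (by nlinarith))).intervalIntegrable_of_Icc (by positivity))
    ((hG.mono (Icc_subset_Icc_left (by positivity))).intervalIntegrable_of_Icc (by nlinarith)),
    hface, hrest]

theorem integral_add_sliverHalfHeight (hΔx : 0 < Δx) (hΔt : 0 < Δt) (hδ0 : 0 < δ)
    (hδ : δ ≤ 1 / 2) (hw : ContinuousOn w (closure (Cplus Δx Δt δ))) :
    ∫ x in (0:ℝ)..Δx, w (x, Δt / 2 + sliverHalfHeight Δx Δt δ x) =
      δ * Δx * upperRightFaceIntegral Δx Δt δ w + ∫ x in δ * Δx..Δx, w (x, Δt / 2) := by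
  set G : ℝ → ℝ := fun x => w (x, Δt / 2 + sliverHalfHeight Δx Δt δ x)
  have hG : ContinuousOn G (Icc 0 Δx) := by
    refine hw.comp (continuous_id.prodMk
      (continuous_const.add continuous_sliverHalfHeight)).continuousOn fun x hx => ?_
    have hmh := sliverHalfHeight_le hΔx hΔt hδ0 hx.1
    exact mem_closure_Cplus_of_add_sliverHalfHeight_le hΔx hΔt hδ0 hδ hx ⟨le_rfl, by linarith⟩
  have hface : ∫ x in (0:ℝ)..δ * Δx, G x = δ * Δx * upperRightFaceIntegral Δx Δt δ w := by
    have := intervalIntegral.smul_integral_comp_mul_right (a := 0) (b := 1) G (δ * Δx)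
    rw [zero_mul, one_mul] at this
    have hflip := intervalIntegral.integral_comp_sub_left (a := 0) (b := 1)
      (fun u => G (u * (δ * Δx))) 1
    rw [sub_self, sub_zero] at hflip
    rw [upperRightFaceIntegral, ← this, smul_eq_mul, ← hflip]
    congr 1
    refine intervalIntegral.integral_congr fun s hs => ?_
    rw [uIcc_of_le zero_le_one] at hs
    simp only [G, sliverHalfHeight_mul hΔx hΔt hδ0 (by linarith [hs.1] : 1 - s ≤ 1)]
    ring_nf
  have hrest : ∫ x in δ * Δx..Δx, G x = ∫ x in δ * Δx..Δx, w (x, Δt / 2) := by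
    refine intervalIntegral.integral_congr fun x hx => ?_
    rw [uIcc_of_le (by nlinarith)] at hx
    simp only [G, sliverHalfHeight_eq_zero hΔx hΔt hδ0 hx.1, add_zero]
  rw [← intervalIntegral.integral_add_adjacent_intervals (b := δ * Δx)
    ((hG.mono (Icc_subset_Icc_right (by nlinarith))).intervalIntegrable_of_Icc (by positivity))
    ((hG.mono (Icc_subset_Icc_left (by positivity))).intervalIntegrable_of_Icc (by nlinarith)),
    hface, hrest]

end Sliver

section Divergence

variable {Δx Δt δ : ℝ} {q : ℝ × ℝ → ℝ} {U : Set (ℝ × ℝ)}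

theorem integrableOn_Cplus_mul_fderiv (hU : IsOpen U) (hCU : closure (Cplus Δx Δt δ) ⊆ U)
    (hq : ContDiffOn ℝ 1 q U) (v : ℝ × ℝ) :
    IntegrableOn (fun p => 2 * q p * fderiv ℝ q p v) (Cplus Δx Δt δ) := by
  have hd : ContinuousOn (fun p => fderiv ℝ q p v) U :=
    (ContinuousLinearMap.apply ℝ ℝ v).continuous.comp_continuousOn
      (hq.continuousOn_fderiv_of_isOpen hU le_rfl)
  exact (((continuousOn_const.mul hq.continuousOn).mul hd).mono hCU).integrableOn_compact
    (isCompact_closure_Cplus Δx Δt δ) |>.mono_set subset_closure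

theorem hasDerivAt_sq_fst (hU : IsOpen U) (hq : ContDiffOn ℝ 1 q U) {x t : ℝ} (h : (x, t) ∈ U) :
    HasDerivAt (fun x => q (x, t) ^ 2) (2 * q (x, t) * fderiv ℝ q (x, t) (1, 0)) x :=
  ((hasDerivAt_id' x).prodMk (hasDerivAt_const x t)).sq_comp_of_differentiableAt
    ((hq.differentiableOn one_ne_zero).differentiableAt (hU.mem_nhds h))

theorem hasDerivAt_sq_snd (hU : IsOpen U) (hq : ContDiffOn ℝ 1 q U) {x t : ℝ} (h : (x, t) ∈ U) :
    HasDerivAt (fun t => q (x, t) ^ 2) (2 * q (x, t) * fderiv ℝ q (x, t) (0, 1)) t :=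
  ((hasDerivAt_const t x).prodMk (hasDerivAt_id' t)).sq_comp_of_differentiableAt
    ((hq.differentiableOn one_ne_zero).differentiableAt (hU.mem_nhds h))

theorem integral_Cplus_mul_fderiv_fst (hΔx : 0 < Δx) (hΔt : 0 < Δt) (hδ0 : 0 < δ)
    (hδ : δ ≤ 1 / 2) (hU : IsOpen U) (hCU : closure (Cplus Δx Δt δ) ⊆ U)
    (hq : ContDiffOn ℝ 1 q U) :
    ∫ p in Cplus Δx Δt δ, 2 * q p * fderiv ℝ q p (1, 0) =
      (∫ t in (0:ℝ)..Δt, q (Δx, t) ^ 2)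
        - ∫ t in (0:ℝ)..Δt, q (sliverRightFace Δx Δt δ t, t) ^ 2 := by
  have hint := integrableOn_Cplus_mul_fderiv hU hCU hq (1, 0)
  have hmem {x t : ℝ} (ht : t ∈ Icc 0 Δt) (hx : x ∈ Icc (sliverRightFace Δx Δt δ t) Δx) :=
    mem_closure_Cplus hΔx hΔt hδ0 hδ ht hx.1 hx.2
  have hfaceΔx (t : ℝ) : sliverRightFace Δx Δt δ t ≤ Δx :=
    (sliverRightFace_le hΔx hΔt hδ0 t).trans (by nlinarith)
  rw [Cplus_eq_preimage_swap_regionBetween hΔx hΔt hδ0] at hint ⊢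
  rw [setIntegral_preimage_swap_regionBetween_eq_integral_sub (F := fun p => q p ^ 2)
    continuous_sliverRightFace.measurable measurable_const measurableSet_Ioo
    (fun t _ => hfaceΔx t)
    (fun t ht x hx => hasDerivAt_sq_fst hU hq (hCU (hmem (Ioo_subset_Icc_self ht) hx))) hint]
  have hqc := (hq.continuousOn.mono hCU).pow 2
  exact setIntegral_Ioo_sub_eq hΔt.le
    (hqc.comp (by fun_prop) fun t ht => hmem ht ⟨hfaceΔx t, le_rfl⟩)
    (hqc.comp (continuous_sliverRightFace.prodMk continuous_id).continuousOn
      fun t ht => hmem ht ⟨le_rfl, hfaceΔx t⟩)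

theorem integral_CplusLower_mul_fderiv_snd (hΔx : 0 < Δx) (hΔt : 0 < Δt) (hδ0 : 0 < δ)
    (hδ : δ ≤ 1 / 2) (hU : IsOpen U) (hCU : closure (Cplus Δx Δt δ) ⊆ U)
    (hq : ContDiffOn ℝ 1 q U)
    (hint : IntegrableOn (fun p => 2 * q p * fderiv ℝ q p (0, 1)) (CplusLower Δx Δt δ)) :
    ∫ p in CplusLower Δx Δt δ, 2 * q p * fderiv ℝ q p (0, 1) =
      (∫ x in (0:ℝ)..Δx, q (x, Δt / 2 - sliverHalfHeight Δx Δt δ x) ^ 2)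
        - ∫ x in (0:ℝ)..Δx, q (x, 0) ^ 2 := by
  have hmem {x t : ℝ} (hx : x ∈ Icc 0 Δx) (ht : t ∈ Icc 0 (Δt / 2 - sliverHalfHeight Δx Δt δ x)) :=
    mem_closure_Cplus_of_le_sub_sliverHalfHeight hΔx hΔt hδ0 hδ hx ht
  have hmh {x : ℝ} (hx : x ∈ Icc 0 Δx) : 0 ≤ Δt / 2 - sliverHalfHeight Δx Δt δ x :=
    sub_nonneg.2 (sliverHalfHeight_le hΔx hΔt hδ0 hx.1)
  rw [CplusLower, setIntegral_regionBetween_eq_integral_sub (F := fun p => q p ^ 2)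
    (g := fun x => Δt / 2 - sliverHalfHeight Δx Δt δ x) measurable_const
    (measurable_const.sub continuous_sliverHalfHeight.measurable) measurableSet_Ioo
    (fun x hx => hmh (Ioo_subset_Icc_self hx))
    (fun x hx t ht => hasDerivAt_sq_snd hU hq (hCU (hmem (Ioo_subset_Icc_self hx) ht))) hint]
  have hqc := (hq.continuousOn.mono hCU).pow 2
  exact setIntegral_Ioo_sub_eq hΔx.le
    (hqc.comp (continuous_id.prodMk
      (continuous_const.sub continuous_sliverHalfHeight)).continuousOn
        fun x hx => hmem hx ⟨hmh hx, le_rfl⟩)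
    (hqc.comp (by fun_prop) fun x hx => hmem hx ⟨le_rfl, hmh hx⟩)

theorem integral_CplusUpper_mul_fderiv_snd (hΔx : 0 < Δx) (hΔt : 0 < Δt) (hδ0 : 0 < δ)
    (hδ : δ ≤ 1 / 2) (hU : IsOpen U) (hCU : closure (Cplus Δx Δt δ) ⊆ U)
    (hq : ContDiffOn ℝ 1 q U)
    (hint : IntegrableOn (fun p => 2 * q p * fderiv ℝ q p (0, 1)) (CplusUpper Δx Δt δ)) :
    ∫ p in CplusUpper Δx Δt δ, 2 * q p * fderiv ℝ q p (0, 1) =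
      (∫ x in (0:ℝ)..Δx, q (x, Δt) ^ 2)
        - ∫ x in (0:ℝ)..Δx, q (x, Δt / 2 + sliverHalfHeight Δx Δt δ x) ^ 2 := by
  have hmem {x t : ℝ} (hx : x ∈ Icc 0 Δx) (ht : t ∈ Icc (Δt / 2 + sliverHalfHeight Δx Δt δ x) Δt) :=
    mem_closure_Cplus_of_add_sliverHalfHeight_le hΔx hΔt hδ0 hδ hx ht
  have hmh {x : ℝ} (hx : x ∈ Icc 0 Δx) : Δt / 2 + sliverHalfHeight Δx Δt δ x ≤ Δt := by
    linarith [sliverHalfHeight_le hΔx hΔt hδ0 hx.1]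
  rw [CplusUpper, setIntegral_regionBetween_eq_integral_sub (F := fun p => q p ^ 2)
    (f := fun x => Δt / 2 + sliverHalfHeight Δx Δt δ x)
    (measurable_const.add continuous_sliverHalfHeight.measurable) measurable_const
    measurableSet_Ioo (fun x hx => hmh (Ioo_subset_Icc_self hx))
    (fun x hx t ht => hasDerivAt_sq_snd hU hq (hCU (hmem (Ioo_subset_Icc_self hx) ht))) hint]
  have hqc := (hq.continuousOn.mono hCU).pow 2
  exact setIntegral_Ioo_sub_eq hΔx.le
    (hqc.comp (by fun_prop) fun x hx => hmem hx ⟨hmh hx, le_rfl⟩)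
    (hqc.comp (continuous_id.prodMk
      (continuous_const.add continuous_sliverHalfHeight)).continuousOn
        fun x hx => hmem hx ⟨le_rfl, hmh hx⟩)

theorem integral_Cplus_mul_fderiv_snd (hΔx : 0 < Δx) (hΔt : 0 < Δt) (hδ0 : 0 < δ)
    (hδ : δ ≤ 1 / 2) (hU : IsOpen U) (hCU : closure (Cplus Δx Δt δ) ⊆ U)
    (hq : ContDiffOn ℝ 1 q U) :
    ∫ p in Cplus Δx Δt δ, 2 * q p * fderiv ℝ q p (0, 1) =
      ((∫ x in (0:ℝ)..Δx, q (x, Δt / 2 - sliverHalfHeight Δx Δt δ x) ^ 2)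
        - ∫ x in (0:ℝ)..Δx, q (x, 0) ^ 2) +
      ((∫ x in (0:ℝ)..Δx, q (x, Δt) ^ 2)
        - ∫ x in (0:ℝ)..Δx, q (x, Δt / 2 + sliverHalfHeight Δx Δt δ x) ^ 2) := by
  have hae := Cplus_ae_eq_CplusLower_union_CplusUpper hΔx hΔt hδ0
  have hint := (integrableOn_Cplus_mul_fderiv hU hCU hq (0, 1)).congr_set_ae hae.symm
  rw [setIntegral_congr_set hae, setIntegral_union disjoint_CplusLower_CplusUpper
    measurableSet_CplusUpper (hint.mono_set subset_union_left)
    (hint.mono_set subset_union_right),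
    integral_CplusLower_mul_fderiv_snd hΔx hΔt hδ0 hδ hU hCU hq
      (hint.mono_set subset_union_left),
    integral_CplusUpper_mul_fderiv_snd hΔx hΔt hδ0 hδ hU hCU hq
      (hint.mono_set subset_union_right)]

end Divergence

/-- Divergence identity on the control volume to the right of the sliver:
for every `C¹` function `q` on a neighbourhood of the closure of `C⁺`,
`2∬_{C⁺} q(∂ₜq + ∂ₓq) dx dt
  = ∫₀^{Δx} q(x,Δt)² dx − ∫₀^{Δx} q(x,0)² dx + ∫₀^{Δt} q(Δx,t)² dt − {q²}⁺`. -/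
theorem divergence_identity_Cplus (Δx Δt δ : ℝ)
    (hΔx : 0 < Δx) (hΔt : 0 < Δt) (hδ0 : 0 < δ) (hδ : δ ≤ 1 / 2)
    (q : ℝ × ℝ → ℝ) (U : Set (ℝ × ℝ)) (hU : IsOpen U)
    (hCU : closure (Cplus Δx Δt δ) ⊆ U) (hq : ContDiffOn ℝ 1 q U) :
    2 * ∫ p in Cplus Δx Δt δ, q p * (dT q p + dX q p) =
      (∫ x in (0:ℝ)..Δx, (q (x, Δt)) ^ 2) - (∫ x in (0:ℝ)..Δx, (q (x, 0)) ^ 2)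
      + (∫ t in (0:ℝ)..Δt, (q (Δx, t)) ^ 2)
      - pairPlus Δx Δt δ (fun p => (q p) ^ 2) := by
  have hsplit : 2 * ∫ p in Cplus Δx Δt δ, q p * (dT q p + dX q p) =
      (∫ p in Cplus Δx Δt δ, 2 * q p * fderiv ℝ q p (1, 0)) +
        ∫ p in Cplus Δx Δt δ, 2 * q p * fderiv ℝ q p (0, 1) := by
    rw [← integral_add (integrableOn_Cplus_mul_fderiv hU hCU hq _)
      (integrableOn_Cplus_mul_fderiv hU hCU hq _), ← integral_const_mul]
    simp only [dT, dX]
    congr 1 with p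
    ring
  have hw : ContinuousOn (fun p => q p ^ 2) (closure (Cplus Δx Δt δ)) :=
    (hq.continuousOn.mono hCU).pow 2
  rw [hsplit, integral_Cplus_mul_fderiv_fst hΔx hΔt hδ0 hδ hU hCU hq,
    integral_Cplus_mul_fderiv_snd hΔx hΔt hδ0 hδ hU hCU hq,
    integral_sliverRightFace hΔx hΔt hδ0 hδ hw, integral_sub_sliverHalfHeight hΔx hΔt hδ0 hδ hw,
    integral_add_sliverHalfHeight hΔx hΔt hδ0 hδ hw, pairPlus_eq]
  ring
end
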